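/- arXiv:2503.04124 — 2 statements merged into one kernel-verified Lean document; each statement's English description precedes it below -/
import Mathlib

section
/- Let G be a triangle-free simple graph and let w and w' be two distinct vertices of G such that their open neighborhoods coincide and are nonempty, i.e., ∅ ≠ N_G(w') = N_G(w). Then γ_h(G) ≤ γ_h(G − w), where G − w denotes the graph obtained from G by deleting the vertex w. -/
/-- A set `S` of vertices is a hop dominating set of `G` if every vertex not in `S`
is at distance exactly 2 from some vertex of `S`. -/
def SimpleGraph.IsHopDominatingSet {V : Type*} (G : SimpleGraph V) (S : Finset V) : Prop :=
  ∀ v : V, v ∉ S → ∃ u ∈ S, G.dist u v = 2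

/-- The hop domination number of `G`: the minimum cardinality of a hop dominating set. -/
noncomputable def SimpleGraph.hopDominationNumber {V : Type*} [Fintype V]
    (G : SimpleGraph V) : ℕ :=
  sInf {k : ℕ | ∃ S : Finset V, G.IsHopDominatingSet S ∧ S.card = k}

/-!
Take a minimum hop dominating set `S` of `G - w`. Hop domination in an induced subgraph
transfers to `G`, so `S` hop dominates every vertex other than `w`. As for `w` itself: either
its twin `w'` lies in `S`, and twins with a common neighbour are at distance two, or some
`u ∈ S` is at distance two from `w'`, and then also from `w`, since `w` and `w'` have the
same neighbours.
-/

namespace SimpleGraph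

variable {V W : Type*} {G : SimpleGraph V}

theorem dist_eq_two_iff {u v : V} :
    G.dist u v = 2 ↔ u ≠ v ∧ ¬G.Adj u v ∧ (G.commonNeighbors u v).Nonempty := by
  rw [dist, ENat.toNat_eq_iff two_ne_zero]
  exact edist_eq_two_iff

theorem Embedding.dist_eq_two {H : SimpleGraph W} (f : H ↪g G) {u v : W}
    (h : H.dist u v = 2) : G.dist (f u) (f v) = 2 := by
  obtain ⟨hne, hnadj, x, hxu, hxv⟩ := dist_eq_two_iff.mp h
  exact dist_eq_two_iff.mpr
    ⟨f.injective.ne hne, f.map_adj_iff.not.mpr hnadj, f x, f.map_adj_iff.mpr hxu,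
      f.map_adj_iff.mpr hxv⟩

section Twins

variable {w w' : V} (hNeq : G.neighborSet w' = G.neighborSet w)
include hNeq

theorem not_adj_of_neighborSet_eq : ¬G.Adj w' w := fun h ↦
  G.loopless.irrefl w (hNeq ▸ h : w ∈ G.neighborSet w)

theorem dist_eq_two_of_neighborSet_eq (hne : w ≠ w') (hN : (G.neighborSet w).Nonempty) :
    G.dist w' w = 2 := by
  refine dist_eq_two_iff.mpr ⟨hne.symm, not_adj_of_neighborSet_eq hNeq, ?_⟩
  rwa [commonNeighbors, hNeq, Set.inter_self]

theorem dist_eq_two_of_dist_eq_two_of_neighborSet_eq {u : V} (hu : u ≠ w)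
    (h : G.dist u w' = 2) : G.dist u w = 2 := by
  obtain ⟨-, hnadj, hcommon⟩ := dist_eq_two_iff.mp h
  have hadj : G.Adj u w' ↔ G.Adj u w := by
    rw [G.adj_comm u w', G.adj_comm u w, ← mem_neighborSet, ← mem_neighborSet, hNeq]
  refine dist_eq_two_iff.mpr ⟨hu, hadj.not.mp hnadj, ?_⟩
  rwa [commonNeighbors, ← hNeq]

end Twins

namespace IsHopDominatingSet

theorem hopDominationNumber_le_card [Fintype V] {S : Finset V} (hS : G.IsHopDominatingSet S) :
    G.hopDominationNumber ≤ S.card :=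
  Nat.sInf_le ⟨S, hS, rfl⟩

theorem map_induce_ne_of_neighborSet_eq {w w' : V} (hne : w ≠ w')
    (hN : (G.neighborSet w).Nonempty) (hNeq : G.neighborSet w' = G.neighborSet w)
    {S : Finset {v : V | v ≠ w}} (hS : (G.induce {v : V | v ≠ w}).IsHopDominatingSet S) :
    G.IsHopDominatingSet (S.map (Function.Embedding.subtype _)) := by
  have dominated_of_ne {v : V} (hvw : v ≠ w) (hv : v ∉ S.map (Function.Embedding.subtype _)) :
      ∃ u ∈ S, G.dist u v = 2 := by
    have hvS : (⟨v, hvw⟩ : {v : V | v ≠ w}) ∉ S := fun h ↦ hv (Finset.mem_map_of_mem _ h)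
    obtain ⟨u, huS, hu⟩ := hS _ hvS
    exact ⟨u, huS, (Embedding.induce _).dist_eq_two hu⟩
  intro v hv
  by_cases hvw : v = w
  · subst hvw
    by_cases hw' : w' ∈ S.map (Function.Embedding.subtype _)
    · exact ⟨w', hw', dist_eq_two_of_neighborSet_eq hNeq hne hN⟩
    · obtain ⟨u, huS, hu⟩ := dominated_of_ne hne.symm hw'
      exact ⟨u, Finset.mem_map_of_mem _ huS,
        dist_eq_two_of_dist_eq_two_of_neighborSet_eq hNeq u.2 hu⟩
  · obtain ⟨u, huS, hu⟩ := dominated_of_ne hvw hv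
    exact ⟨u, Finset.mem_map_of_mem _ huS, hu⟩

end IsHopDominatingSet

theorem exists_isHopDominatingSet_card_eq_hopDominationNumber [Fintype V]
    (G : SimpleGraph V) :
    ∃ S : Finset V, G.IsHopDominatingSet S ∧ S.card = G.hopDominationNumber :=
  Nat.sInf_mem (s := {k | ∃ S : Finset V, G.IsHopDominatingSet S ∧ S.card = k})
    ⟨_, Finset.univ, fun v hv ↦ absurd (Finset.mem_univ v) hv, rfl⟩

end SimpleGraph

open SimpleGraph in
theorem hop_domination_delete_twin_general {V : Type*} [Fintype V] [DecidableEq V]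
    (G : SimpleGraph V) (w w' : V) (hne : w ≠ w')
    (hN : (G.neighborSet w).Nonempty) (hNeq : G.neighborSet w' = G.neighborSet w) :
    G.hopDominationNumber ≤
      (G.induce {v : V | v ≠ w}).hopDominationNumber := by
  obtain ⟨S, hS, hcard⟩ :=
    (G.induce {v : V | v ≠ w}).exists_isHopDominatingSet_card_eq_hopDominationNumber
  calc G.hopDominationNumber
      ≤ (S.map (Function.Embedding.subtype _)).card :=
        (hS.map_induce_ne_of_neighborSet_eq hne hN hNeq).hopDominationNumber_le_card
    _ = (G.induce {v : V | v ≠ w}).hopDominationNumber := by rw [Finset.card_map, hcard]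

theorem hop_domination_delete_twin {V : Type*} [Fintype V] [DecidableEq V]
    (G : SimpleGraph V) (htf : G.CliqueFree 3) (w w' : V) (hne : w ≠ w')
    (hN : (G.neighborSet w).Nonempty) (hNeq : G.neighborSet w' = G.neighborSet w) :
    G.hopDominationNumber ≤
      (G.induce {v : V | v ≠ w}).hopDominationNumber :=
  hop_domination_delete_twin_general G w w' hne hN hNeq
end

section
/- For every integer n ≥ 4, the hop domination number of the cycle C_n satisfies: γ_h(C_n) ≤ (2n+2)/5 if n ∈ {4,7,14}; γ_h(C_n) ≤ (2n+4)/5 if n = 8; and γ_h(C_n) ≤ 2n/5 otherwise (all inequalities understood as 5·γ_h(C_n) ≤ 2n+2, ≤ 2n+4, ≤ 2n respectively). -/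
/-!
The vertices at distance two from `m` in `C_n` are `m ± 2 (mod n)`. The vertices `m < n` with
`m % 6 < 2` form a hop dominating set: a vertex with `m % 6 ∈ {2, 3}` is reached from `m - 2`, and
one with `m % 6 ∈ {4, 5}` from `m + 2`, or from `m + 2 - n ∈ {0, 1}` across the wrap-around.
This set has `(n + 5) / 6 + (n + 4) / 6 ≈ n / 3` elements, within the claimed bound for every `n`
except `n = 9`, which is settled by the multiples of `3`: they hop dominate `C_n` whenever `3 ∣ n`.
-/

namespace SimpleGraph

theorem dist_eq_two_of_adj_of_adj {V : Type*} {G : SimpleGraph V} {u v w : V} (huv : u ≠ v)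
    (hnadj : ¬G.Adj u v) (huw : G.Adj u w) (hwv : G.Adj w v) : G.dist u v = 2 := by
  have h : G.edist u v = 2 :=
    edist_eq_two_iff.mpr ⟨huv, hnadj, w, (G.mem_commonNeighbors).mpr ⟨huw, hwv.symm⟩⟩
  rw [dist, h]
  rfl

theorem hopDominationNumber_le_card {V : Type*} [Fintype V] {G : SimpleGraph V} {S : Finset V}
    (hS : G.IsHopDominatingSet S) : G.hopDominationNumber ≤ S.card :=
  Nat.sInf_le ⟨S, hS, rfl⟩

theorem cycleGraph_adj_iff_val {n : ℕ} (hn : 2 ≤ n) {u v : Fin n} :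
    (cycleGraph n).Adj u v ↔
      u.val + 1 = v.val ∨ v.val + 1 = u.val ∨ u.val + 1 = v.val + n ∨ v.val + 1 = u.val + n := by
  have hsub : ∀ a b : Fin n, (a - b).val = 1 ↔ a.val = b.val + 1 ∨ a.val + n = b.val + 1 := by
    intro a b
    rcases le_or_gt b a with hba | hab
    · rw [Fin.coe_sub_iff_le.mpr hba]
      omega
    · rw [Fin.coe_sub_iff_lt.mpr hab]
      omega
  rw [cycleGraph_adj', hsub, hsub]
  omega

theorem cycleGraph_dist_eq_two {n : ℕ} (hn : 4 ≤ n) {u v : Fin n}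
    (h : u.val + 2 = v.val ∨ u.val + 2 = v.val + n) : (cycleGraph n).dist u v = 2 := by
  obtain ⟨w, hw⟩ : ∃ w : Fin n, u.val + 1 = w.val ∨ u.val + 1 = w.val + n := by
    by_cases hu : u.val + 1 < n
    · exact ⟨⟨u.val + 1, hu⟩, Or.inl rfl⟩
    · exact ⟨⟨0, by omega⟩, Or.inr (by simp only; omega)⟩
  refine dist_eq_two_of_adj_of_adj (w := w) ?_ ?_ ?_ ?_
  · rintro rfl
    omega
  all_goals rw [cycleGraph_adj_iff_val (by omega)]; omega

theorem hopDominationNumber_cycleGraph_le_count {n : ℕ} (hn : 4 ≤ n) (P : ℕ → Prop)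
    [DecidablePred P]
    (hP : ∀ m < n, ¬P m → ∃ u < n, P u ∧
      (u + 2 = m ∨ u + 2 = m + n ∨ m + 2 = u ∨ m + 2 = u + n)) :
    (cycleGraph n).hopDominationNumber ≤ n.count P := by
  let S : Finset (Fin n) := {v | P v.val}
  have hdom : (cycleGraph n).IsHopDominatingSet S := by
    intro v hv
    obtain ⟨u, hu, hPu, huv⟩ := hP v.val v.isLt (by simpa [S] using hv)
    refine ⟨⟨u, hu⟩, by simpa [S] using hPu, ?_⟩
    rcases huv with huv | huv | huv | huv
    · exact cycleGraph_dist_eq_two hn (Or.inl huv)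
    · exact cycleGraph_dist_eq_two hn (Or.inr huv)
    · rw [dist_comm]; exact cycleGraph_dist_eq_two hn (Or.inl huv)
    · rw [dist_comm]; exact cycleGraph_dist_eq_two hn (Or.inr huv)
  have hcard : S.card = n.count P := by
    rw [Nat.count_eq_card_filter_range, ← Nat.Iio_eq_range, ← Fin.map_valEmbedding_univ,
      Finset.filter_map, Finset.card_map]
    rfl
  exact hcard ▸ hopDominationNumber_le_card hdom

theorem count_mod_six_lt_two (n : ℕ) : n.count (· % 6 < 2) = (n + 5) / 6 + (n + 4) / 6 := by
  induction n with
  | zero => rfl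
  | succ n ih => rw [Nat.count_succ, ih]; split_ifs <;> omega

theorem count_mod_three_eq_zero (n : ℕ) : n.count (· % 3 = 0) = (n + 2) / 3 := by
  induction n with
  | zero => rfl
  | succ n ih => rw [Nat.count_succ, ih]; split_ifs <;> omega

theorem hopDominationNumber_cycleGraph_le {n : ℕ} (hn : 4 ≤ n) :
    (cycleGraph n).hopDominationNumber ≤ (n + 5) / 6 + (n + 4) / 6 := by
  rw [← count_mod_six_lt_two]
  refine hopDominationNumber_cycleGraph_le_count hn _ fun m hm hPm => ?_
  by_cases hlow : m % 6 < 4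
  · exact ⟨m - 2, by omega, by omega, by omega⟩
  by_cases hwrap : m + 2 < n
  · exact ⟨m + 2, hwrap, by omega, by omega⟩
  · exact ⟨m + 2 - n, by omega, by omega, by omega⟩

theorem hopDominationNumber_cycleGraph_le_of_three_dvd {n : ℕ} (hn : 4 ≤ n) (h3 : 3 ∣ n) :
    (cycleGraph n).hopDominationNumber ≤ n / 3 := by
  rw [show n / 3 = n.count (· % 3 = 0) by rw [count_mod_three_eq_zero]; omega]
  refine hopDominationNumber_cycleGraph_le_count hn _ fun m hm hPm => ?_
  by_cases hlow : m % 3 = 2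
  · exact ⟨m - 2, by omega, by omega, by omega⟩
  by_cases hwrap : m + 2 < n
  · exact ⟨m + 2, hwrap, by omega, by omega⟩
  · exact ⟨m + 2 - n, by omega, by omega, by omega⟩

end SimpleGraph

theorem hop_domination_cycle_upper (n : ℕ) (hn : 4 ≤ n) :
    (n = 4 ∨ n = 7 ∨ n = 14 →
      5 * (SimpleGraph.cycleGraph n).hopDominationNumber ≤ 2 * n + 2) ∧
    (n = 8 → 5 * (SimpleGraph.cycleGraph n).hopDominationNumber ≤ 2 * n + 4) ∧
    (n ≠ 4 ∧ n ≠ 7 ∧ n ≠ 14 ∧ n ≠ 8 →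
      5 * (SimpleGraph.cycleGraph n).hopDominationNumber ≤ 2 * n) := by
  have hsix := SimpleGraph.hopDominationNumber_cycleGraph_le hn
  by_cases h3 : 3 ∣ n
  · have hthree := SimpleGraph.hopDominationNumber_cycleGraph_le_of_three_dvd hn h3
    omega
  · omega
end
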